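/- For all integers n and all positive integers k, the value A_k(n) is a real number, i.e. the imaginary part of A_k(n) is zero. -/

import Mathlib

/-!
`A_1(n) = 1`. For `k ≠ 1` the reflection `h ↦ k - h` permutes the reduced residues mod `k`, and
`s(k - h, k) = -s(h, k)` because `fract (-x) = 1 - fract x` away from the integers (`k ∤ h i` when
`h` is coprime to `k` and `0 < i < k`). Hence the reflection sends every summand of `A_k(n)` to its
complex conjugate, up to the factor `exp (-2πin) = 1`, so `A_k(n)` is its own conjugate.
-/

open Complex

/-- The Dedekind sum `s(h, k)`. -/
noncomputable def dedekindSum (h k : ℕ) : ℝ :=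
  ∑ i ∈ Finset.Ico 1 k,
    (i : ℝ) / k * ((h * i : ℝ) / k - ⌊(h * i : ℝ) / k⌋ - 1 / 2)

/-- The exponential sum `A_k(n)` from the Hardy-Ramanujan-Rademacher formula. -/
noncomputable def radeA (k : ℕ) (n : ℤ) : ℂ :=
  ∑ h ∈ Finset.range k,
    if Nat.gcd h k = 1 then
      Complex.exp (Real.pi * Complex.I * (dedekindSum h k - 2 * h * n / k))
    else 0

open ComplexConjugate

lemma fract_mul_div_ne_zero {h k i : ℕ} (hcop : h.Coprime k) (hi₀ : 0 < i) (hik : i < k) :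
    Int.fract ((h * i : ℝ) / k) ≠ 0 := by
  have hdvd : ¬ k ∣ h * i := fun hdvd =>
    absurd (Nat.le_of_dvd hi₀ (hcop.symm.dvd_of_dvd_mul_left hdvd)) hik.not_ge
  rw [← Nat.cast_mul, Int.fract_div_natCast_eq_div_natCast_mod]
  exact div_ne_zero (Nat.cast_ne_zero.mpr (mt Nat.dvd_of_mod_eq_zero hdvd))
    (Nat.cast_ne_zero.mpr (by omega))

lemma dedekindSum_sub_left {h k : ℕ} (hcop : h.Coprime k) (hhk : h ≤ k) :
    dedekindSum (k - h) k = -dedekindSum h k := by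
  rw [dedekindSum, dedekindSum, ← Finset.sum_neg_distrib]
  refine Finset.sum_congr rfl fun i hi => ?_
  obtain ⟨hi₀, hik⟩ := Finset.mem_Ico.mp hi
  have hk : (k : ℝ) ≠ 0 := Nat.cast_ne_zero.mpr (by omega)
  have hreflect : ((k - h : ℕ) * i : ℝ) / k = i - (h * i : ℝ) / k := by
    rw [Nat.cast_sub hhk]
    field_simp
  rw [Int.self_sub_floor, Int.self_sub_floor, hreflect, sub_eq_add_neg (i : ℝ),
    Int.fract_natCast_add, Int.fract_neg (fract_mul_div_ne_zero hcop hi₀ hik)]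
  ring

noncomputable def radeTerm (k : ℕ) (n : ℤ) (h : ℕ) : ℂ :=
  exp (Real.pi * I * (dedekindSum h k - 2 * h * n / k))

def reducedResidues (k : ℕ) : Finset ℕ :=
  (Finset.range k).filter (·.Coprime k)

lemma mem_reducedResidues {k h : ℕ} : h ∈ reducedResidues k ↔ h < k ∧ h.Coprime k := by
  rw [reducedResidues, Finset.mem_filter, Finset.mem_range]

lemma radeA_eq_sum_radeTerm (k : ℕ) (n : ℤ) :
    radeA k n = ∑ h ∈ reducedResidues k, radeTerm k n h := by
  rw [reducedResidues, Finset.sum_filter]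
  rfl

lemma conj_radeTerm {k h : ℕ} (n : ℤ) (hcop : h.Coprime k) (hhk : h ≤ k) :
    conj (radeTerm k n h) = radeTerm k n (k - h) := by
  have hk : (k : ℂ) ≠ 0 := Nat.cast_ne_zero.mpr (by rintro rfl; simp_all)
  rw [radeTerm, radeTerm, ← exp_conj, dedekindSum_sub_left hcop hhk, Nat.cast_sub hhk]
  have hconj : conj (Real.pi * I * (dedekindSum h k - 2 * h * n / k) : ℂ) =
      Real.pi * I * (-dedekindSum h k - 2 * (k - h) * n / k) + n * (2 * Real.pi * I) := by
    simp only [map_mul, map_sub, map_div₀, conj_ofReal, conj_I, map_natCast, map_intCast, map_ofNat]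
    field_simp
    ring
  rw [ofReal_neg, hconj, exp_add, exp_int_mul_two_pi_mul_I, mul_one]

lemma sub_mem_reducedResidues {k h : ℕ} (hk : k ≠ 1) (hh : h ∈ reducedResidues k) :
    k - h ∈ reducedResidues k := by
  obtain ⟨hhk, hcop⟩ := mem_reducedResidues.mp hh
  have hh₀ : h ≠ 0 := by
    rintro rfl
    exact hk (Nat.coprime_zero_left k |>.mp hcop)
  exact mem_reducedResidues.mpr ⟨by omega, (Nat.coprime_self_sub_left hhk.le).mpr hcop⟩

lemma conj_radeA (k : ℕ) (n : ℤ) : conj (radeA k n) = radeA k n := by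
  rcases eq_or_ne k 1 with rfl | hk
  · simp [radeA, dedekindSum]
  have hreflect {h : ℕ} (hh : h ∈ reducedResidues k) : k - (k - h) = h :=
    Nat.sub_sub_self (mem_reducedResidues.mp hh).1.le
  rw [radeA_eq_sum_radeTerm, map_sum]
  refine Finset.sum_nbij' (k - ·) (k - ·) (fun _ ↦ sub_mem_reducedResidues hk)
    (fun _ ↦ sub_mem_reducedResidues hk) (fun _ ↦ hreflect) (fun _ ↦ hreflect) fun h hh ↦ ?_
  obtain ⟨hhk, hcop⟩ := mem_reducedResidues.mp hh
  exact conj_radeTerm n hcop hhk.le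

theorem radeA_real_general (k : ℕ) (n : ℤ) : (radeA k n).im = 0 :=
  conj_eq_iff_im.mp (conj_radeA k n)

theorem radeA_real (k : ℕ) (hk : 0 < k) (n : ℤ) : (radeA k n).im = 0 :=
  radeA_real_general k n
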